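/- arXiv:2004.05678 — 7 statements merged into one kernel-verified Lean document; each statement's English description precedes it below -/
import Mathlib

section
/- For real x, y, let P(z₁,z₂) = 1 - (1/3)z₁ + (1/3)z₂² - z₁z₂². Then P(e^{ix}, e^{iy}) = 0 if and only if 3 sin(x/2 + y) + sin(x/2 − y) = 0. -/
theorem stmt_3 (x y : ℝ) :
    (1 - (1/3 : ℂ) * Complex.exp (Complex.I * x)
        + (1/3 : ℂ) * Complex.exp (Complex.I * y) ^ 2
        - Complex.exp (Complex.I * x) * Complex.exp (Complex.I * y) ^ 2 = 0)
      ↔ 3 * Real.sin (x / 2 + y) + Real.sin (x / 2 - y) = 0 := by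
  set u : ℂ := Complex.exp (Complex.I * (x/2)) with hu_def
  set v : ℂ := Complex.exp (Complex.I * y) with hv_def
  have hu : u ≠ 0 := Complex.exp_ne_zero _
  have hv : v ≠ 0 := Complex.exp_ne_zero _
  have hx : Complex.exp (Complex.I * x) = u ^ 2 := by
    rw [hu_def, sq, ← Complex.exp_add]; ring_nf
  have e1 : Complex.exp ((((x/2 + y : ℝ)) : ℂ) * Complex.I) = u * v := by
    rw [hu_def, hv_def, ← Complex.exp_add]; push_cast; ring_nf
  have e1' : Complex.exp (-(((x/2 + y : ℝ)) : ℂ) * Complex.I) = (u * v)⁻¹ := by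
    rw [show (-(((x/2 + y : ℝ)) : ℂ)) * Complex.I = -((((x/2 + y : ℝ)) : ℂ) * Complex.I) by ring,
      Complex.exp_neg, e1]
  have e2 : Complex.exp ((((x/2 - y : ℝ)) : ℂ) * Complex.I) = u * v⁻¹ := by
    rw [hu_def, hv_def, ← Complex.exp_neg, ← Complex.exp_add]; push_cast; ring_nf
  have e2' : Complex.exp (-(((x/2 - y : ℝ)) : ℂ) * Complex.I) = u⁻¹ * v := by
    rw [hu_def, hv_def, ← Complex.exp_neg, ← Complex.exp_add]; push_cast; ring_nf
  have h1 : 2 * (Real.sin (x/2 + y) : ℂ) * (u * v) = (1 - (u*v)^2) * Complex.I := by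
    have h := Complex.two_sin ((((x/2 + y : ℝ)) : ℂ))
    rw [e1, e1'] at h
    rw [Complex.ofReal_sin]
    field_simp at h ⊢
    linear_combination h
  have h2 : 2 * (Real.sin (x/2 - y) : ℂ) * (u * v) = (v^2 - u^2) * Complex.I := by
    have h := Complex.two_sin ((((x/2 - y : ℝ)) : ℂ))
    rw [e2, e2'] at h
    rw [Complex.ofReal_sin]
    field_simp at h ⊢
    linear_combination h
  have key : 1 - (1/3 : ℂ) * Complex.exp (Complex.I * x)
        + (1/3 : ℂ) * v ^ 2 - Complex.exp (Complex.I * x) * v ^ 2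
      = (-2 * Complex.I / 3) * (u * v)
        * (3 * (Real.sin (x/2 + y) : ℂ) + (Real.sin (x/2 - y) : ℂ)) := by
    rw [hx]
    linear_combination Complex.I * h1 + (Complex.I/3) * h2
      + ((1 - u^2*v^2) + (v^2 - u^2)/3) * Complex.I_sq
  have hne : (-2 * Complex.I / 3) * (u * v) ≠ 0 := by
    apply mul_ne_zero
    · simp [Complex.I_ne_zero]
    · exact mul_ne_zero hu hv
  have hB : (3 * (Real.sin (x/2 + y) : ℂ) + (Real.sin (x/2 - y) : ℂ))
      = ((3 * Real.sin (x/2 + y) + Real.sin (x/2 - y) : ℝ) : ℂ) := by push_cast; ring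
  rw [key, hB, mul_eq_zero, Complex.ofReal_eq_zero, or_iff_right hne]
end

section
/- Fix ξ₁, ξ₂ > 0. Every interval [2πn/(ξ₁/2 + ξ₂), 2π(n+1)/(ξ₁/2 + ξ₂)] for n ∈ ℤ contains at least one solution γ of the equation 3 sin((ξ₁/2 + ξ₂)γ) + sin((ξ₁/2 − ξ₂)γ) = 0. -/
open Real Set

/-- At `2πn + π/2` the sine term equals `c`, at `2πn + 3π/2` it equals `-c`; the smaller
perturbation `h` cannot change these signs, so the intermediate value theorem applies. -/
theorem exists_mul_sin_add_eq_zero_mem_Icc {c : ℝ} {h : ℝ → ℝ} (hh : Continuous h)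
    (hbound : ∀ t, |h t| < c) (n : ℤ) :
    ∃ t ∈ Icc (2 * π * n) (2 * π * (n + 1)), c * sin t + h t = 0 := by
  set p := π / 2 + n * (2 * π) with hp_def
  set q := π / 2 + π + n * (2 * π) with hq_def
  have hsin_p : sin p = 1 := by rw [sin_add_int_mul_two_pi, sin_pi_div_two]
  have hsin_q : sin q = -1 := by rw [sin_add_int_mul_two_pi, sin_add_pi, sin_pi_div_two]
  have hpos : 0 < c * sin p + h p := by
    rw [hsin_p]; linarith [neg_abs_le (h p), hbound p]
  have hneg : c * sin q + h q < 0 := by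
    rw [hsin_q]; linarith [le_abs_self (h q), hbound q]
  have hpq : p ≤ q := by linarith [pi_pos]
  obtain ⟨t, ⟨hpt, htq⟩, ht⟩ := intermediate_value_Icc' hpq
    (f := fun t => c * sin t + h t) (by fun_prop) ⟨hneg.le, hpos.le⟩
  exact ⟨t, ⟨by linarith [pi_pos], by linarith [pi_pos]⟩, ht⟩

theorem exists_mul_sin_mul_add_eq_zero_mem_Icc {a c : ℝ} {g : ℝ → ℝ} (ha : 0 < a)
    (hg : Continuous g) (hbound : ∀ x, |g x| < c) (n : ℤ) :
    ∃ γ ∈ Icc (2 * π * n / a) (2 * π * (n + 1) / a), c * sin (a * γ) + g γ = 0 := by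
  obtain ⟨t, ⟨hlo, hhi⟩, ht⟩ :=
    exists_mul_sin_add_eq_zero_mem_Icc (h := fun t => g (t / a)) (by fun_prop)
      (fun t => hbound (t / a)) n
  refine ⟨t / a, ⟨by gcongr, by gcongr⟩, ?_⟩
  rwa [mul_div_cancel₀ t ha.ne']

theorem stmt_6 (ξ₁ ξ₂ : ℝ) (hξ₁ : 0 < ξ₁) (hξ₂ : 0 < ξ₂) (n : ℤ) :
    ∃ γ ∈ Set.Icc (2 * Real.pi * n / (ξ₁ / 2 + ξ₂)) (2 * Real.pi * (n + 1) / (ξ₁ / 2 + ξ₂)),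
      3 * Real.sin ((ξ₁ / 2 + ξ₂) * γ) + Real.sin ((ξ₁ / 2 - ξ₂) * γ) = 0 :=
  exists_mul_sin_mul_add_eq_zero_mem_Icc (by positivity) (by fun_prop)
    (fun γ => (abs_sin_le_one _).trans_lt (by norm_num)) n
end

section
/- Fix ξ₁, ξ₂ > 0. All real zeros of f(γ) = 3 sin((ξ₁/2 + ξ₂)γ) + sin((ξ₁/2 − ξ₂)γ) are simple, i.e., if f(γ) = 0 then f'(γ) ≠ 0. -/
/- Write `f t = c sin (a t) + sin (b t)` with `c = 3`, `a = ξ₁/2 + ξ₂`, `b = ξ₁/2 - ξ₂`, so `b² ≤ a²`.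
If `f` and `f'` both vanished at `x`, then `sin (b x) = -c sin (a x)` and `b cos (b x) = -c a cos (a x)`,
so `c² a² = a² sin² (b x) + b² cos² (b x) ≤ a²`, which fails since `c² > 1`. -/

open Real

lemma hasDerivAt_const_mul_sin_mul_add_sin_mul (c a b x : ℝ) :
    HasDerivAt (fun t => c * sin (a * t) + sin (b * t))
      (c * (a * cos (a * x)) + b * cos (b * x)) x := by
  have hsin (k : ℝ) : HasDerivAt (fun t => sin (k * t)) (k * cos (k * x)) x := by
    simpa [mul_comm] using ((hasDerivAt_id x).const_mul k).sin
  exact ((hsin a).const_mul c).add (hsin b)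

lemma sq_mul_sq_le_sq_of_sin_eq_of_mul_cos_eq {a b c θ φ : ℝ} (hab : b ^ 2 ≤ a ^ 2)
    (hsin : sin φ = -(c * sin θ)) (hcos : b * cos φ = -(c * (a * cos θ))) :
    c ^ 2 * a ^ 2 ≤ a ^ 2 :=
  calc c ^ 2 * a ^ 2 = a ^ 2 * (c * sin θ) ^ 2 + (c * (a * cos θ)) ^ 2 := by
          linear_combination (-(c ^ 2 * a ^ 2)) * sin_sq_add_cos_sq θ
    _ = a ^ 2 * sin φ ^ 2 + b ^ 2 * cos φ ^ 2 := by
          rw [hsin, ← neg_sq (c * (a * cos θ)), ← hcos]; ring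
    _ ≤ a ^ 2 * sin φ ^ 2 + a ^ 2 * cos φ ^ 2 := by gcongr
    _ = a ^ 2 := by rw [← mul_add, sin_sq_add_cos_sq, mul_one]

lemma const_mul_sin_mul_add_sin_mul_deriv_ne_zero {a b c x : ℝ} (ha : a ≠ 0)
    (hab : b ^ 2 ≤ a ^ 2) (hc : 1 < c ^ 2) (hf : c * sin (a * x) + sin (b * x) = 0) :
    c * (a * cos (a * x)) + b * cos (b * x) ≠ 0 := by
  intro hd
  have hle := sq_mul_sq_le_sq_of_sin_eq_of_mul_cos_eq (c := c) (θ := a * x) (φ := b * x) hab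
    (by linarith) (by linarith)
  have ha2 : 0 < a ^ 2 := by positivity
  nlinarith

theorem stmt_7 (ξ₁ ξ₂ : ℝ) (hξ₁ : 0 < ξ₁) (hξ₂ : 0 < ξ₂) (γ : ℝ)
    (hγ : 3 * Real.sin ((ξ₁ / 2 + ξ₂) * γ) + Real.sin ((ξ₁ / 2 - ξ₂) * γ) = 0) :
    deriv (fun t : ℝ => 3 * Real.sin ((ξ₁ / 2 + ξ₂) * t) + Real.sin ((ξ₁ / 2 - ξ₂) * t)) γ ≠ 0 := by
  rw [(hasDerivAt_const_mul_sin_mul_add_sin_mul 3 _ _ γ).deriv]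
  refine const_mul_sin_mul_add_sin_mul_deriv_ne_zero (by positivity) ?_ (by norm_num) hγ
  nlinarith
end

section
/- Fix ξ₁, ξ₂ > 0. The set of real zeros of f(γ) = 3 sin((ξ₁/2 + ξ₂)γ) + sin((ξ₁/2 − ξ₂)γ) is uniformly discrete: there exists ρ > 0 such that any two distinct zeros are at distance at least ρ. -/
/-!
Write `f γ = 3 sin (a γ) + sin (b γ)` with `a = ξ₁/2 + ξ₂` and `|b| ≤ a`. At a zero of `f`,
`|sin (a γ)| ≤ 1/3`, so `|cos (a γ)| ≥ 2/3` and `|f' γ| ≥ 3a · 2/3 - |b| ≥ a`. On the other hand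
`f'` is `4a²`-Lipschitz, and by Rolle it vanishes between two zeros of `f`; hence two distinct
zeros are at distance at least `a / (4a²) = 1 / (4a)`.
-/

open Real

theorem le_mul_abs_sub_of_hasDerivAt_of_eq_zero {f f' : ℝ → ℝ} {K m : ℝ}
    (hf : ∀ x, HasDerivAt f (f' x) x) (hf' : ∀ x y, |f' x - f' y| ≤ K * |x - y|)
    (hm : ∀ x, f x = 0 → m ≤ |f' x|) {x y : ℝ} (hx : f x = 0) (hy : f y = 0) (hxy : x ≠ y) :
    m ≤ K * |x - y| := by
  wlog hlt : x < y generalizing x y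
  · rw [abs_sub_comm]
    exact this hy hx hxy.symm (lt_of_le_of_ne (not_lt.1 hlt) hxy.symm)
  have hK : 0 ≤ K :=
    nonneg_of_mul_nonneg_left ((abs_nonneg _).trans (hf' x y)) (abs_pos.2 (sub_ne_zero.2 hxy))
  have hcont : Continuous f := continuous_iff_continuousAt.2 fun z => (hf z).continuousAt
  obtain ⟨c, hc, hc0⟩ :=
    exists_hasDerivAt_eq_zero hlt hcont.continuousOn (hx.trans hy.symm) fun z _ => hf z
  have hxc : |x - c| ≤ |x - y| := by
    rw [abs_sub_comm x c, abs_sub_comm x y, abs_of_pos (sub_pos.2 hc.1),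
      abs_of_pos (sub_pos.2 hlt)]
    linarith [hc.2]
  calc m ≤ |f' x - f' c| := by rw [hc0, sub_zero]; exact hm x hx
    _ ≤ K * |x - c| := hf' x c
    _ ≤ K * |x - y| := mul_le_mul_of_nonneg_left hxc hK

theorem hasDerivAt_three_mul_sin_add_sin (a b x : ℝ) :
    HasDerivAt (fun x => 3 * sin (a * x) + sin (b * x))
      (3 * a * cos (a * x) + b * cos (b * x)) x :=
  ((((hasDerivAt_id' x).const_mul a).sin.const_mul 3).add
    ((hasDerivAt_id' x).const_mul b).sin).congr_deriv (by ring)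

section

variable {a b : ℝ}

theorem abs_three_mul_cos_add_cos_sub_le (hb : |b| ≤ a) (x y : ℝ) :
    |(3 * a * cos (a * x) + b * cos (b * x)) - (3 * a * cos (a * y) + b * cos (b * y))|
      ≤ 4 * a ^ 2 * |x - y| := by
  have ha : 0 ≤ a := (abs_nonneg b).trans hb
  have hcosa := abs_cos_sub_cos_le (a * x) (a * y)
  have hcosb := abs_cos_sub_cos_le (b * x) (b * y)
  rw [← mul_sub, abs_mul, abs_of_nonneg ha] at hcosa
  rw [← mul_sub, abs_mul] at hcosb
  have hbb : |b| * |b| ≤ a * a := mul_le_mul hb hb (abs_nonneg b) ha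
  calc _ = |3 * a * (cos (a * x) - cos (a * y)) + b * (cos (b * x) - cos (b * y))| := by
        ring_nf
    _ ≤ 3 * a * |cos (a * x) - cos (a * y)| + |b| * |cos (b * x) - cos (b * y)| := by
        refine (abs_add_le _ _).trans ?_
        rw [abs_mul b, abs_mul (3 * a), abs_of_nonneg (by positivity : (0 : ℝ) ≤ 3 * a)]
    _ ≤ 3 * a * (a * |x - y|) + |b| * (|b| * |x - y|) := by gcongr
    _ ≤ 4 * a ^ 2 * |x - y| := by nlinarith [abs_nonneg (x - y)]

theorem le_abs_three_mul_cos_add_cos_of_eq_zero (hb : |b| ≤ a) {x : ℝ}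
    (hx : 3 * sin (a * x) + sin (b * x) = 0) :
    a ≤ |3 * a * cos (a * x) + b * cos (b * x)| := by
  have ha : 0 ≤ a := (abs_nonneg b).trans hb
  have hsin : 3 * |sin (a * x)| ≤ 1 := by
    have h := abs_sin_le_one (b * x)
    rwa [show sin (b * x) = -(3 * sin (a * x)) by linarith, abs_neg, abs_mul, abs_of_pos three_pos]
      at h
  have hcos : 2 / 3 ≤ |cos (a * x)| := by
    nlinarith [sin_sq_add_cos_sq (a * x), sq_abs (sin (a * x)), sq_abs (cos (a * x)),
      abs_nonneg (sin (a * x)), abs_nonneg (cos (a * x))]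
  have hbcos : |b * cos (b * x)| ≤ a := by
    rw [abs_mul]
    simpa using mul_le_mul hb (abs_cos_le_one (b * x)) (abs_nonneg _) ha
  calc a ≤ |3 * a * cos (a * x)| - |b * cos (b * x)| := by
        rw [abs_mul, abs_of_nonneg (by positivity : (0 : ℝ) ≤ 3 * a)]
        nlinarith
    _ ≤ |3 * a * cos (a * x) + b * cos (b * x)| := by
        simpa using abs_sub_abs_le_abs_sub (3 * a * cos (a * x)) (-(b * cos (b * x)))

end

theorem stmt_8 (ξ₁ ξ₂ : ℝ) (hξ₁ : 0 < ξ₁) (hξ₂ : 0 < ξ₂) :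
    ∃ ρ > (0 : ℝ), ∀ γ₁ γ₂ : ℝ,
      3 * Real.sin ((ξ₁ / 2 + ξ₂) * γ₁) + Real.sin ((ξ₁ / 2 - ξ₂) * γ₁) = 0 →
      3 * Real.sin ((ξ₁ / 2 + ξ₂) * γ₂) + Real.sin ((ξ₁ / 2 - ξ₂) * γ₂) = 0 →
      γ₁ ≠ γ₂ → ρ ≤ |γ₁ - γ₂| := by
  have ha : 0 < ξ₁ / 2 + ξ₂ := by positivity
  have hb : |ξ₁ / 2 - ξ₂| ≤ ξ₁ / 2 + ξ₂ := abs_le.2 ⟨by linarith, by linarith⟩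
  set a := ξ₁ / 2 + ξ₂
  set b := ξ₁ / 2 - ξ₂
  refine ⟨1 / (4 * a), by positivity, fun γ₁ γ₂ h₁ h₂ hne => ?_⟩
  have key : a ≤ 4 * a ^ 2 * |γ₁ - γ₂| :=
    le_mul_abs_sub_of_hasDerivAt_of_eq_zero (hasDerivAt_three_mul_sin_add_sin a b)
      (abs_three_mul_cos_add_cos_sub_le hb) (fun _ => le_abs_three_mul_cos_add_cos_of_eq_zero hb)
      h₁ h₂ hne
  rw [div_le_iff₀ (by positivity)]
  nlinarith
end

section
/- Let P be a polynomial in n complex variables with P(0) ≠ 0 and nonvanishing on the closed unit polydisk, and define arg P(z) by continuous variation along the path s ↦ P(sz), s ∈ [0,1], starting from arg P(0) ∈ (−π, π]. Then for every z in the closed unit polydisk, |arg P(z) − arg P(0)| ≤ π · deg P. -/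
/-!
Restricted to the complex line through `z`, `P` becomes a one-variable polynomial
`q(s) = P(s z)` of degree at most `deg P` with no zero on `[0, 1]`. Factor it as
`q(s) = q(0) ∏ (1 - s / r)` over its roots `r`. Since no root lies on `[0, 1]`, each factor stays
in the slit plane as `s` runs over `[0, 1]`, so `arg q(0) + ∑ arg (1 - s / r)` is a continuous
argument of `q(s)`. Two continuous arguments on an interval differ by a constant multiple of
`2π`, so the total change of `θ` equals `∑ arg (1 - 1 / r)`, and each term has absolute value
at most `π`.
-/

open Complex Polynomial Set
open scoped Real

namespace MvPolynomial

variable {σ R : Type*} [CommSemiring R]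

theorem eval_aeval_C_mul_X (P : MvPolynomial σ R) (z : σ → R) (s : R) :
    (aeval (fun j => Polynomial.C (z j) * Polynomial.X) P).eval s =
      eval (fun j => s * z j) P := by
  rw [← Polynomial.coe_aeval_eq_eval, comp_aeval_apply, ← aeval_eq_eval]
  congr 2
  funext j
  simp only [map_mul, Polynomial.aeval_C, Polynomial.aeval_X, Algebra.algebraMap_self,
    RingHom.id_apply]
  ring

theorem natDegree_aeval_le (P : MvPolynomial σ R) (f : σ → R[X]) {d : ℕ}
    (hf : ∀ j, (f j).natDegree ≤ d) : (aeval f P).natDegree ≤ d * P.totalDegree := by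
  rw [aeval_def, eval₂_eq]
  refine natDegree_sum_le_of_forall_le _ _ fun m hm => ?_
  refine (natDegree_C_mul_le _ _).trans <| (natDegree_prod_le _ _).trans ?_
  calc ∑ j ∈ m.support, (f j ^ m j).natDegree
      ≤ ∑ j ∈ m.support, d * m j :=
        Finset.sum_le_sum fun j _ => natDegree_pow_le.trans (by rw [mul_comm]; gcongr; exact hf j)
    _ ≤ d * P.totalDegree := by rw [← Finset.mul_sum]; gcongr; exact le_totalDegree hm

end MvPolynomial

theorem Polynomial.Splits.eval_eq_eval_zero_mul_prod_roots {K : Type*} [Field K] {p : K[X]}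
    (hp : p.Splits) (h0 : p.eval 0 ≠ 0) (x : K) :
    p.eval x = p.eval 0 * (p.roots.map fun r => 1 - x / r).prod := by
  rw [hp.eval_eq_prod_roots x, hp.eval_eq_prod_roots 0, mul_assoc, ← Multiset.prod_map_mul]
  congr 2
  refine Multiset.map_congr rfl fun r hr => ?_
  have hr0 : r ≠ 0 := by
    rintro rfl
    exact h0 (isRoot_of_mem_roots hr)
  field_simp
  ring

theorem Complex.one_sub_div_mem_slitPlane {r : ℂ} {s : ℝ} (hs : 0 ≤ s)
    (hr : ∀ t ∈ Icc 0 s, (t : ℂ) ≠ r) : 1 - s / r ∈ slitPlane := by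
  rw [mem_slitPlane_iff]
  by_contra! h
  obtain ⟨hre, him⟩ := h
  simp only [sub_re, one_re, sub_im, one_im, zero_sub, neg_eq_zero] at hre him
  have hr0 : r ≠ 0 := fun h => hr 0 ⟨le_rfl, hs⟩ (by simp [h])
  have hs0 : (s : ℂ) ≠ 0 := by
    rintro h
    norm_num [h] at hre
  -- `s / r` is a real number `≥ 1`, so `r = s / (s / r)` is a point of `[0, s]`
  have hw : (s : ℂ) / r = ((s / r : ℂ).re : ℂ) := Complex.ext (by simp) (by simp [him])
  refine hr (s / (s / r : ℂ).re) ⟨div_nonneg hs (by linarith), div_le_self hs (by linarith)⟩ ?_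
  push_cast
  rw [← hw]
  field_simp

theorem Complex.multiset_prod_eq_norm_mul_exp_sum_arg (m : Multiset ℂ) :
    m.prod = ‖m.prod‖ * exp ((m.map arg).sum * I) := by
  induction m using Multiset.induction_on with
  | empty => simp
  | cons w m ih =>
    rw [Multiset.prod_cons, Multiset.map_cons, Multiset.sum_cons, norm_mul, ofReal_add, add_mul,
      exp_add]
    conv_lhs => rw [← norm_mul_exp_arg_mul_I w, ih]
    push_cast
    ring

theorem IsPreconnected.sub_eq_sub_of_exp_mul_I_eq {α : Type*} [TopologicalSpace α] {S : Set α}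
    (hS : IsPreconnected S) {θ φ : α → ℝ} (hθ : ContinuousOn θ S) (hφ : ContinuousOn φ S)
    (h : ∀ s ∈ S, exp (θ s * I) = exp (φ s * I)) {x y : α} (hx : x ∈ S) (hy : y ∈ S) :
    θ x - φ x = θ y - φ y := by
  refine hS.constant_of_mapsTo (T := (AddSubgroup.zmultiples (2 * π) : Set ℝ))
    (SetLike.isDiscrete_iff_discreteTopology.mpr inferInstance) (hθ.sub hφ) (fun s hs => ?_) hx hy
  obtain ⟨m, hm⟩ := Circle.exp_eq_exp.mp (Subtype.ext (by simpa only [Circle.coe_exp] using h s hs))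
  exact ⟨m, by simp only [zsmul_eq_mul, Pi.sub_apply, hm]; ring⟩

theorem Polynomial.abs_sub_le_pi_mul_natDegree {p : ℂ[X]}
    (hp : ∀ s ∈ Icc (0 : ℝ) 1, p.eval (s : ℂ) ≠ 0) {θ : ℝ → ℝ}
    (hθc : ContinuousOn θ (Icc 0 1))
    (hθ : ∀ s ∈ Icc (0 : ℝ) 1, p.eval (s : ℂ) = ‖p.eval (s : ℂ)‖ * exp (θ s * I)) :
    |θ 1 - θ 0| ≤ π * p.natDegree := by
  have hroots : ∀ r ∈ p.roots, ∀ t ∈ Icc (0 : ℝ) 1, (t : ℂ) ≠ r := fun r hr t ht h =>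
    hp t ht (h ▸ isRoot_of_mem_roots hr)
  have h0 : p.eval 0 ≠ 0 := by simpa using hp 0 (left_mem_Icc.2 zero_le_one)
  let Φ : ℝ → ℝ := fun s => ((p.eval 0 ::ₘ p.roots.map fun r => 1 - s / r).map arg).sum
  have hΦc : ContinuousOn Φ (Icc 0 1) := by
    simp only [Φ, Multiset.map_cons, Multiset.sum_cons, Multiset.map_map, Function.comp_def]
    refine continuousOn_const.add (continuousOn_multiset_sum _ fun r hr s hs => ?_)
    have hslit := one_sub_div_mem_slitPlane hs.1 fun t ht => hroots r hr t ⟨ht.1, ht.2.trans hs.2⟩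
    exact (ContinuousAt.comp (f := fun s : ℝ => 1 - (s : ℂ) / r) (continuousAt_arg hslit)
      (by fun_prop)).continuousWithinAt
  have hexp : ∀ s ∈ Icc (0 : ℝ) 1, exp (θ s * I) = exp (Φ s * I) := by
    intro s hs
    have hΦ : p.eval (s : ℂ) = ‖p.eval (s : ℂ)‖ * exp (Φ s * I) := by
      rw [(IsAlgClosed.splits p).eval_eq_eval_zero_mul_prod_roots h0, ← Multiset.prod_cons]
      exact multiset_prod_eq_norm_mul_exp_sum_arg _
    exact mul_left_cancel₀ (by simpa using hp s hs) ((hθ s hs).symm.trans hΦ)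
  have hlift := isPreconnected_Icc.sub_eq_sub_of_exp_mul_I_eq hθc hΦc hexp
    (right_mem_Icc.2 zero_le_one) (left_mem_Icc.2 zero_le_one)
  have hΦ1 : Φ 1 - Φ 0 = (p.roots.map fun r => arg (1 - 1 / r)).sum := by
    simp [Φ, Multiset.map_map]
  calc |θ 1 - θ 0| = |(p.roots.map fun r => arg (1 - 1 / r)).sum| := by
        rw [← hΦ1]; congr 1; linarith
    _ ≤ ((p.roots.map fun r => arg (1 - 1 / r)).map abs).sum := Multiset.abs_sum_le_sum_abs
    _ ≤ Multiset.card p.roots • π := by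
        refine (Multiset.sum_le_card_nsmul _ π ?_).trans_eq (by simp)
        simp only [Multiset.map_map, Multiset.mem_map]
        rintro _ ⟨r, -, rfl⟩
        exact abs_arg_le_pi _
    _ ≤ π * p.natDegree := by
        rw [nsmul_eq_mul, mul_comm]; gcongr; exact_mod_cast card_roots' p

theorem stmt_10_general (n : ℕ) (P : MvPolynomial (Fin n) ℂ)
    (hP : ∀ z : Fin n → ℂ, (∀ j, ‖z j‖ ≤ 1) → MvPolynomial.eval z P ≠ 0)
    (z : Fin n → ℂ) (hz : ∀ j, ‖z j‖ ≤ 1)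
    (θ : ℝ → ℝ) (hθcont : ContinuousOn θ (Set.Icc 0 1))
    (hθ : ∀ s ∈ Set.Icc (0 : ℝ) 1,
      MvPolynomial.eval (fun j => (s : ℂ) * z j) P =
        (‖MvPolynomial.eval (fun j => (s : ℂ) * z j) P‖ : ℂ) *
          Complex.exp (Complex.I * θ s)) :
    |θ 1 - θ 0| ≤ Real.pi * P.totalDegree := by
  set q : ℂ[X] := MvPolynomial.aeval (fun j => C (z j) * X) P
  have hq : ∀ s : ℂ, q.eval s = MvPolynomial.eval (fun j => s * z j) P :=
    MvPolynomial.eval_aeval_C_mul_X P z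
  have hdeg : q.natDegree ≤ P.totalDegree := by
    simpa using MvPolynomial.natDegree_aeval_le P _ fun j => (natDegree_C_mul_le _ _).trans natDegree_X_le
  have hq0 : ∀ s ∈ Icc (0 : ℝ) 1, q.eval (s : ℂ) ≠ 0 := fun s hs => by
    rw [hq]
    refine hP _ fun j => ?_
    rw [norm_mul, Complex.norm_of_nonneg hs.1]
    exact mul_le_one₀ hs.2 (norm_nonneg _) (hz j)
  calc |θ 1 - θ 0| ≤ π * q.natDegree :=
        abs_sub_le_pi_mul_natDegree hq0 hθcont fun s hs => by rw [hq, mul_comm _ I]; exact hθ s hs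
    _ ≤ π * P.totalDegree := by gcongr

theorem stmt_10 (n : ℕ) (P : MvPolynomial (Fin n) ℂ)
    (hP : ∀ z : Fin n → ℂ, (∀ j, ‖z j‖ ≤ 1) → MvPolynomial.eval z P ≠ 0)
    (z : Fin n → ℂ) (hz : ∀ j, ‖z j‖ ≤ 1)
    (θ : ℝ → ℝ) (hθcont : ContinuousOn θ (Set.Icc 0 1))
    (hθ0 : θ 0 = Complex.arg (MvPolynomial.eval (fun _ => (0 : ℂ)) P))
    (hθ : ∀ s ∈ Set.Icc (0 : ℝ) 1,
      MvPolynomial.eval (fun j => (s : ℂ) * z j) P =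
        (‖MvPolynomial.eval (fun j => (s : ℂ) * z j) P‖ : ℂ) *
          Complex.exp (Complex.I * θ s)) :
    |θ 1 - θ 0| ≤ Real.pi * P.totalDegree :=
  stmt_10_general n P hP z hz θ hθcont hθ
end

section
/- Under the hypotheses of the previous functional equation F(−s) = η^{−1} e^{(ξ·ℓ)s} G(s), all zeros of F and of G lie on the imaginary axis: if F(s) = 0 then Re(s) = 0. -/
/-! With `zⱼ = exp (-ξⱼ s)`, all `|zⱼ| < 1` when `Re s > 0` and all `|zⱼ| > 1` when `Re s < 0`.
Stability of `P` and `Q` excludes zeros in the first region; in the second, the functional equation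
`Q(z) = η zˡ P(z⁻¹)`, read at `z` for `Q` and at `z⁻¹` for `P`, moves the question back into the
open polydisc. -/

open MvPolynomial

def IsPolydiscStable {σ : Type*} (R : MvPolynomial σ ℂ) : Prop :=
  ∀ z : σ → ℂ, (∀ j, ‖z j‖ < 1) → eval z R ≠ 0

section FunctionalEquation

variable {σ : Type*} [Fintype σ]

def FunctionalEquation (P Q : MvPolynomial σ ℂ) (η : ℂ) (ℓ : σ → ℕ) : Prop :=
  ∀ z : σ → ℂ, (∀ j, z j ≠ 0) → eval z Q = η * (∏ j, z j ^ ℓ j) * eval (fun j => (z j)⁻¹) P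

variable {P Q : MvPolynomial σ ℂ} {η : ℂ} {ℓ : σ → ℕ}

lemma FunctionalEquation.ne_zero (hfe : FunctionalEquation P Q η ℓ) (hQ : IsPolydiscStable Q) :
    η ≠ 0 := by
  rintro rfl
  apply hQ (fun _ => 2⁻¹) fun _ => by norm_num
  simp [hfe (fun _ => 2⁻¹) fun _ => by norm_num]

lemma FunctionalEquation.eval_fst_ne_zero_of_one_lt_norm (hfe : FunctionalEquation P Q η ℓ)
    (hQ : IsPolydiscStable Q) {z : σ → ℂ} (hz : ∀ j, 1 < ‖z j‖) : eval z P ≠ 0 := by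
  have hz₀ : ∀ j, z j ≠ 0 := fun j => norm_pos_iff.mp (one_pos.trans (hz j))
  have hQ_inv := hQ (fun j => (z j)⁻¹) fun j => by
    rw [norm_inv]; exact inv_lt_one_of_one_lt₀ (hz j)
  rw [hfe _ fun j => inv_ne_zero (hz₀ j)] at hQ_inv
  simp only [inv_inv] at hQ_inv
  exact right_ne_zero_of_mul hQ_inv

lemma FunctionalEquation.eval_snd_ne_zero_of_one_lt_norm (hfe : FunctionalEquation P Q η ℓ)
    (hP : IsPolydiscStable P) (hQ : IsPolydiscStable Q) {z : σ → ℂ} (hz : ∀ j, 1 < ‖z j‖) :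
    eval z Q ≠ 0 := by
  have hz₀ : ∀ j, z j ≠ 0 := fun j => norm_pos_iff.mp (one_pos.trans (hz j))
  rw [hfe z hz₀]
  refine mul_ne_zero (mul_ne_zero (hfe.ne_zero hQ) ?_) ?_
  · exact Finset.prod_ne_zero_iff.mpr fun j _ => pow_ne_zero _ (hz₀ j)
  · refine hP _ fun j => ?_
    rw [norm_inv]; exact inv_lt_one_of_one_lt₀ (hz j)

end FunctionalEquation

lemma norm_exp_neg_ofReal_mul (ξ : ℝ) (s : ℂ) :
    ‖Complex.exp (-(ξ : ℂ) * s)‖ = Real.exp (-ξ * s.re) := by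
  rw [Complex.norm_exp]
  simp [Complex.mul_re]

lemma re_eq_zero_of_eval_exp_eq_zero {σ : Type*} {R : MvPolynomial σ ℂ}
    (h_in : IsPolydiscStable R)
    (h_out : ∀ z : σ → ℂ, (∀ j, 1 < ‖z j‖) → eval z R ≠ 0)
    {ξ : σ → ℝ} (hξ : ∀ j, 0 < ξ j) {s : ℂ}
    (hs : eval (fun j => Complex.exp (-(ξ j : ℂ) * s)) R = 0) : s.re = 0 := by
  by_contra hre
  rcases lt_or_gt_of_ne hre with hneg | hpos
  · refine h_out _ (fun j => ?_) hs
    rw [norm_exp_neg_ofReal_mul, Real.one_lt_exp_iff]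
    nlinarith [hξ j]
  · refine h_in _ (fun j => ?_) hs
    rw [norm_exp_neg_ofReal_mul, Real.exp_lt_one_iff]
    nlinarith [hξ j]

theorem stmt_16_general (n : ℕ) (P Q : MvPolynomial (Fin n) ℂ) (η : ℂ) (ℓ : Fin n → ℕ)
    (hP : ∀ z : Fin n → ℂ, (∀ j, ‖z j‖ < 1) → MvPolynomial.eval z P ≠ 0)
    (hQ : ∀ z : Fin n → ℂ, (∀ j, ‖z j‖ < 1) → MvPolynomial.eval z Q ≠ 0)
    (hfe : ∀ z : Fin n → ℂ, (∀ j, z j ≠ 0) →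
      MvPolynomial.eval z Q =
        η * (∏ j, z j ^ ℓ j) * MvPolynomial.eval (fun j => (z j)⁻¹) P)
    (ξ : Fin n → ℝ) (hξ : ∀ j, 0 < ξ j) :
    (∀ s : ℂ, MvPolynomial.eval (fun j => Complex.exp (-(ξ j : ℂ) * s)) P = 0 → s.re = 0) ∧
    (∀ s : ℂ, MvPolynomial.eval (fun j => Complex.exp (-(ξ j : ℂ) * s)) Q = 0 → s.re = 0) := by
  have hfe : FunctionalEquation P Q η ℓ := hfe
  exact ⟨fun _ => re_eq_zero_of_eval_exp_eq_zero hP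
      (fun _ => hfe.eval_fst_ne_zero_of_one_lt_norm hQ) hξ,
    fun _ => re_eq_zero_of_eval_exp_eq_zero hQ
      (fun _ => hfe.eval_snd_ne_zero_of_one_lt_norm hP hQ) hξ⟩

theorem stmt_16 (n : ℕ) (P Q : MvPolynomial (Fin n) ℂ) (η : ℂ) (ℓ : Fin n → ℕ)
    (hP : ∀ z : Fin n → ℂ, (∀ j, ‖z j‖ < 1) → MvPolynomial.eval z P ≠ 0)
    (hQ : ∀ z : Fin n → ℂ, (∀ j, ‖z j‖ < 1) → MvPolynomial.eval z Q ≠ 0)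
    (hfe : ∀ z : Fin n → ℂ, (∀ j, z j ≠ 0) →
      MvPolynomial.eval z Q =
        η * (∏ j, z j ^ ℓ j) * MvPolynomial.eval (fun j => (z j)⁻¹) P)
    (hP0 : MvPolynomial.eval (0 : Fin n → ℂ) P = 1)
    (hQ0 : MvPolynomial.eval (0 : Fin n → ℂ) Q = 1)
    (ξ : Fin n → ℝ) (hξ : ∀ j, 0 < ξ j) :
    (∀ s : ℂ, MvPolynomial.eval (fun j => Complex.exp (-(ξ j : ℂ) * s)) P = 0 → s.re = 0) ∧
    (∀ s : ℂ, MvPolynomial.eval (fun j => Complex.exp (-(ξ j : ℂ) * s)) Q = 0 → s.re = 0) :=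
  stmt_16_general n P Q η ℓ hP hQ hfe ξ hξ
end

section
/- Let ξ₁, ξ₂ > 0 with ξ₁/ξ₂ irrational. Then the set {(γξ₁ mod 2π, γξ₂ mod 2π) : γ ∈ ℝ, 3 sin((ξ₁/2+ξ₂)γ) + sin((ξ₁/2−ξ₂)γ) = 0} is infinite (as a subset of the torus ℝ²/(2πℤ)²). -/
/-!
Every interval `[π/2 + 2πk, 3π/2 + 2πk]` scaled by `1/(ξ₁/2 + ξ₂)` contains a zero of
`γ ↦ 3 sin((ξ₁/2 + ξ₂)γ) + sin((ξ₁/2 − ξ₂)γ)`, since the first term dominates and changes sign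
there; so the equation has infinitely many solutions. Two solutions `s ≠ t` with the same point on
the torus would give `(s - t)ξ₁, (s - t)ξ₂ ∈ 2πℤ`, making `ξ₁/ξ₂` rational; hence the map
`γ ↦ (γξ₁, γξ₂)` to the torus is injective and the image of the solution set is infinite.
-/

open Real Set

lemma Irrational.ne_rat_mul {x y : ℝ} (h : Irrational (x / y)) (q : ℚ) : x ≠ q * y := by
  rintro rfl
  rcases eq_or_ne y 0 with rfl | hy
  · simp at h
  · exact h.ne_rat q (by field_simp)

lemma exists_mul_sin_add_sin_eq_zero_mem_Icc {r : ℝ} (hr : 1 ≤ r) (c : ℝ) (k : ℕ) :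
    ∃ t ∈ Icc (π / 2 + k * (2 * π)) (π / 2 + k * (2 * π) + π),
      r * sin t + sin (c * t) = 0 := by
  set x := π / 2 + k * (2 * π)
  have hsin_left : sin x = 1 := by rw [sin_add_nat_mul_two_pi, sin_pi_div_two]
  have hsin_right : sin (x + π) = -1 := by rw [sin_add_pi, hsin_left]
  have hcont : Continuous fun t => r * sin t + sin (c * t) := by fun_prop
  refine intermediate_value_Icc' (by linarith [pi_pos]) hcont.continuousOn ⟨?_, ?_⟩
  · rw [hsin_right]; linarith [sin_le_one (c * (x + π))]
  · rw [hsin_left]; linarith [neg_one_le_sin (c * x)]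

lemma infinite_setOf_mul_sin_add_sin_eq_zero {r a : ℝ} (hr : 1 ≤ r) (ha : a ≠ 0) (b : ℝ) :
    {γ : ℝ | r * sin (a * γ) + sin (b * γ) = 0}.Infinite := by
  choose t ht_mem ht_zero using exists_mul_sin_add_sin_eq_zero_mem_Icc hr (b / a)
  have ht_mono : StrictMono t := by
    refine strictMono_nat_of_lt_succ fun k => ?_
    calc t k ≤ π / 2 + k * (2 * π) + π := (ht_mem k).2
      _ < π / 2 + (k + 1 : ℕ) * (2 * π) := by push_cast; linarith [pi_pos]
      _ ≤ t (k + 1) := (ht_mem (k + 1)).1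
  refine infinite_of_injective_forall_mem (f := fun k => t k / a)
    (fun i j hij => ht_mono.injective ((div_left_inj' ha).mp hij)) fun k => ?_
  have := ht_zero k
  rwa [mem_ofPred_eq, mul_div_cancel₀ _ ha, mul_div_assoc', ← div_mul_eq_mul_div]

lemma injective_coe_mul_prod_addCircle {p ξ₁ ξ₂ : ℝ} (hp : p ≠ 0) (hirr : Irrational (ξ₁ / ξ₂)) :
    Function.Injective fun γ : ℝ => ((↑(γ * ξ₁) : AddCircle p), (↑(γ * ξ₂) : AddCircle p)) := by
  intro s t hst
  obtain ⟨h₁, h₂⟩ := Prod.mk.inj hst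
  rw [← sub_eq_zero, ← AddCircle.coe_sub, ← sub_mul, AddCircle.coe_eq_zero_iff] at h₁ h₂
  obtain ⟨m, hm⟩ := h₁
  obtain ⟨n, hn⟩ := h₂
  by_contra hne
  refine hirr.ne_rat (m / n) ?_
  rw [zsmul_eq_mul] at hm hn
  push_cast
  rw [← mul_div_mul_left ξ₁ ξ₂ (sub_ne_zero.mpr hne), ← hm, ← hn, mul_div_mul_right _ _ hp]

theorem stmt_17_general (ξ₁ ξ₂ : ℝ) (hirr : Irrational (ξ₁ / ξ₂)) :
    {p : AddCircle (2 * Real.pi) × AddCircle (2 * Real.pi) |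
      ∃ γ : ℝ, 3 * Real.sin ((ξ₁ / 2 + ξ₂) * γ) + Real.sin ((ξ₁ / 2 - ξ₂) * γ) = 0 ∧
        p = (↑(γ * ξ₁), ↑(γ * ξ₂))}.Infinite := by
  have ha : ξ₁ / 2 + ξ₂ ≠ 0 := fun h => hirr.ne_rat_mul (-2) (by push_cast; linarith)
  have hzeros := infinite_setOf_mul_sin_add_sin_eq_zero (by norm_num : (1 : ℝ) ≤ 3) ha (ξ₁ / 2 - ξ₂)
  convert hzeros.image (injective_coe_mul_prod_addCircle two_pi_pos.ne' hirr).injOn using 1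
  ext p
  simp [eq_comm]

theorem stmt_17 (ξ₁ ξ₂ : ℝ) (hξ₁ : 0 < ξ₁) (hξ₂ : 0 < ξ₂) (hirr : Irrational (ξ₁ / ξ₂)) :
    {p : AddCircle (2 * Real.pi) × AddCircle (2 * Real.pi) |
      ∃ γ : ℝ, 3 * Real.sin ((ξ₁ / 2 + ξ₂) * γ) + Real.sin ((ξ₁ / 2 - ξ₂) * γ) = 0 ∧
        p = (↑(γ * ξ₁), ↑(γ * ξ₂))}.Infinite :=
  stmt_17_general ξ₁ ξ₂ hirr
end
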